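/- Let θ, z : (a,b) → ℝ be C¹ functions satisfying θ'(t) = √(1 - cos²θ(t)/z(t)²) > 0 and z'(t) = sin θ(t) on (a,b), with z > |cos θ|, and suppose θ(t) → 0 and z(t) → 1 as t → a⁺. Then sin²θ(t)/(z(t) - cos θ(t))^{3/2} → 4√2/3 as t → a⁺. -/

import Mathlib

/-!
By L'Hôpital's rule it suffices to find the limit of the quotient of derivatives,
`2 sin θ cos θ θ' / (3/2 √(z - cos θ) sin θ (1 + θ'))`. The defining equation of `θ'` gives
`θ' z = √(z - cos θ) √(z + cos θ)`, so the factor `√(z - cos θ)`, which vanishes at `a`, cancels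
and the quotient becomes `4/3 cos θ √(z + cos θ) / (z (1 + θ'))`, which tends to `4/3 · √2`.
Since `θ' > 0`, `θ` is increasing, so `θ > 0` near `a` and `sin θ` does not vanish there.
-/

open Set Filter Real Topology

lemma sqrt_one_sub_sq_div_sq_pos {c z : ℝ} (h : |c| < z) : 0 < √(1 - c ^ 2 / z ^ 2) := by
  have hz : 0 < z := (abs_nonneg c).trans_lt h
  rw [sqrt_pos, sub_pos, div_lt_one (by positivity), ← sq_abs]
  exact pow_lt_pow_left₀ h (abs_nonneg c) two_ne_zero

lemma sqrt_one_sub_sq_div_sq_mul {c z : ℝ} (h : |c| < z) :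
    √(1 - c ^ 2 / z ^ 2) * z = √(z - c) * √(z + c) := by
  have hz : 0 < z := (abs_nonneg c).trans_lt h
  calc √(1 - c ^ 2 / z ^ 2) * z = √((1 - c ^ 2 / z ^ 2) * z ^ 2) := by
        rw [sqrt_mul' _ (sq_nonneg z), sqrt_sq hz.le]
    _ = √((z - c) * (z + c)) := by congr 1; field_simp; ring
    _ = √(z - c) * √(z + c) := sqrt_mul (by linarith [le_abs_self c]) _

lemma lhopital_quotient_eq {s c z : ℝ} (hs : s ≠ 0) (h : |c| < z) :
    2 * s * c * √(1 - c ^ 2 / z ^ 2) / (3 / 2 * √(z - c) * (s * (1 + √(1 - c ^ 2 / z ^ 2))))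
      = 4 / 3 * c * √(z + c) / (z * (1 + √(1 - c ^ 2 / z ^ 2))) := by
  have hz : 0 < z := (abs_nonneg c).trans_lt h
  have hw : 0 < √(z - c) := sqrt_pos.2 (by linarith [le_abs_self c])
  rw [div_eq_div_iff (by positivity) (by positivity)]
  linear_combination (2 * s * c * (1 + √(1 - c ^ 2 / z ^ 2))) * sqrt_one_sub_sq_div_sq_mul h

lemma tendsto_lhopital_quotient {α : Type*} {l : Filter α} {c z : α → ℝ}
    (hc : Tendsto c l (𝓝 1)) (hz : Tendsto z l (𝓝 1)) :
    Tendsto (fun t => 4 / 3 * c t * √(z t + c t) / (z t * (1 + √(1 - c t ^ 2 / z t ^ 2)))) l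
      (𝓝 (4 * √2 / 3)) := by
  have h := ((hc.const_mul (4 / 3)).mul (hz.add hc).sqrt).div
    (hz.mul ((((hc.pow 2).div (hz.pow 2) (by norm_num)).const_sub 1).sqrt.const_add 1))
    (by norm_num)
  rwa [show (4 * √2 / 3 : ℝ) = 4 / 3 * 1 * √(1 + 1) / (1 * (1 + √(1 - 1 ^ 2 / 1 ^ 2))) by
    norm_num [mul_div_right_comm]]

lemma StrictMonoOn.lt_of_tendsto_nhdsGT {β : Type*} [LinearOrder β] [TopologicalSpace β]
    [OrderClosedTopology β] {f : ℝ → β} {a b : ℝ} {L : β} (hf : StrictMonoOn f (Ioo a b))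
    (hL : Tendsto f (𝓝[>] a) (𝓝 L)) {t : ℝ} (ht : t ∈ Ioo a b) : L < f t := by
  obtain ⟨s, has, hst⟩ := exists_between ht.1
  have hs : s ∈ Ioo a b := ⟨has, hst.trans ht.2⟩
  have hLs : L ≤ f s := le_of_tendsto hL <| by
    filter_upwards [Ioo_mem_nhdsGT has] with u hu
    exact (hf ⟨hu.1, hu.2.trans hs.2⟩ hs hu.2).le
  exact hLs.trans_lt (hf hs ht hst)

lemma strictMonoOn_Ioo_of_hasDerivAt_pos {f f' : ℝ → ℝ} {a b : ℝ}
    (hf : ∀ t ∈ Ioo a b, HasDerivAt f (f' t) t) (hf' : ∀ t ∈ Ioo a b, 0 < f' t) :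
    StrictMonoOn f (Ioo a b) :=
  strictMonoOn_of_hasDerivWithinAt_pos (convex_Ioo a b)
    (fun t ht => (hf t ht).continuousAt.continuousWithinAt)
    (fun t ht => (hf t (interior_subset ht)).hasDerivWithinAt)
    (fun t ht => hf' t (interior_subset ht))

lemma HasDerivAt.sin_sq {θ : ℝ → ℝ} {d t : ℝ} (hθ : HasDerivAt θ d t) :
    HasDerivAt (fun u => Real.sin (θ u) ^ 2) (2 * Real.sin (θ t) * Real.cos (θ t) * d) t := by
  refine (hθ.sin.fun_pow 2).congr_deriv ?_
  push_cast
  ring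

lemma HasDerivAt.sub_cos_rpow_three_halves {θ z : ℝ → ℝ} {d t : ℝ} (hθ : HasDerivAt θ d t)
    (hz : HasDerivAt z (Real.sin (θ t)) t) :
    HasDerivAt (fun u => (z u - Real.cos (θ u)) ^ ((3 : ℝ) / 2))
      (3 / 2 * √(z t - Real.cos (θ t)) * (Real.sin (θ t) * (1 + d))) t := by
  convert (hz.fun_sub hθ.cos).rpow_const (p := 3 / 2) (Or.inr (by norm_num)) using 1
  rw [sqrt_eq_rpow]
  norm_num
  ring

theorem sin_sq_div_rpow_tendsto_general (a b : ℝ) (θ z θ' : ℝ → ℝ)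
    (hdom : ∀ t ∈ Set.Ioo a b, |Real.cos (θ t)| < z t)
    (hθ : ∀ t ∈ Set.Ioo a b, HasDerivAt θ (θ' t) t)
    (hθ'eq : ∀ t ∈ Set.Ioo a b,
      θ' t = Real.sqrt (1 - (Real.cos (θ t)) ^ 2 / (z t) ^ 2))
    (hz' : ∀ t ∈ Set.Ioo a b, HasDerivAt z (Real.sin (θ t)) t)
    (hθlim : Filter.Tendsto θ (nhdsWithin a (Set.Ioo a b)) (nhds 0))
    (hzlim : Filter.Tendsto z (nhdsWithin a (Set.Ioo a b)) (nhds 1)) :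
    Filter.Tendsto
      (fun t => (Real.sin (θ t)) ^ 2 / (z t - Real.cos (θ t)) ^ ((3 : ℝ) / 2))
      (nhdsWithin a (Set.Ioo a b)) (nhds (4 * Real.sqrt 2 / 3)) := by
  rcases le_or_gt b a with hba | hab
  · rw [Ioo_eq_empty hba.not_gt, nhdsWithin_empty]
    exact tendsto_bot
  rw [nhdsWithin_Ioo_eq_nhdsGT hab] at hθlim hzlim ⊢
  have hIoo : Ioo a b ∈ 𝓝[>] a := Ioo_mem_nhdsGT hab
  have hθ'pos : ∀ t ∈ Ioo a b, 0 < θ' t := fun t ht =>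
    hθ'eq t ht ▸ sqrt_one_sub_sq_div_sq_pos (hdom t ht)
  have hθpos : ∀ t ∈ Ioo a b, 0 < θ t := fun t ht =>
    (strictMonoOn_Ioo_of_hasDerivAt_pos hθ hθ'pos).lt_of_tendsto_nhdsGT hθlim ht
  have hsin : ∀ᶠ t in 𝓝[>] a, 0 < Real.sin (θ t) := by
    filter_upwards [hIoo, hθlim.eventually (gt_mem_nhds pi_pos)] with t ht hπ
    exact sin_pos_of_pos_of_lt_pi (hθpos t ht) hπ
  have hcos : Tendsto (fun t => Real.cos (θ t)) (𝓝[>] a) (𝓝 1) :=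
    (continuous_cos.tendsto' 0 1 cos_zero).comp hθlim
  have hsin_sq : Tendsto (fun t => Real.sin (θ t) ^ 2) (𝓝[>] a) (𝓝 0) := by
    simpa using ((continuous_sin.tendsto' 0 0 sin_zero).comp hθlim).pow 2
  have hgap : Tendsto (fun t => (z t - Real.cos (θ t)) ^ ((3 : ℝ) / 2)) (𝓝[>] a) (𝓝 0) := by
    simpa using (hzlim.sub hcos).rpow_const (p := 3 / 2) (Or.inr (by norm_num))
  refine HasDerivAt.lhopital_zero_nhdsGT
    (eventually_of_mem hIoo fun t ht => (hθ t ht).sin_sq)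
    (eventually_of_mem hIoo fun t ht => (hθ t ht).sub_cos_rpow_three_halves (hz' t ht))
    ?_ hsin_sq hgap ((tendsto_lhopital_quotient hcos hzlim).congr' ?_)
  · filter_upwards [hIoo, hsin] with t ht hs
    have := sqrt_pos.2 (sub_pos.2 ((le_abs_self _).trans_lt (hdom t ht)))
    have := hθ'pos t ht
    positivity
  · filter_upwards [hIoo, hsin] with t ht hs
    rw [hθ'eq t ht, lhopital_quotient_eq hs.ne' (hdom t ht)]

theorem sin_sq_div_rpow_tendsto (a b : ℝ) (θ z θ' : ℝ → ℝ)
    (hdom : ∀ t ∈ Set.Ioo a b, |Real.cos (θ t)| < z t)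
    (hθ : ∀ t ∈ Set.Ioo a b, HasDerivAt θ (θ' t) t)
    (hθ'eq : ∀ t ∈ Set.Ioo a b,
      θ' t = Real.sqrt (1 - (Real.cos (θ t)) ^ 2 / (z t) ^ 2))
    (hθ'pos : ∀ t ∈ Set.Ioo a b, 0 < θ' t)
    (hz' : ∀ t ∈ Set.Ioo a b, HasDerivAt z (Real.sin (θ t)) t)
    (hθlim : Filter.Tendsto θ (nhdsWithin a (Set.Ioo a b)) (nhds 0))
    (hzlim : Filter.Tendsto z (nhdsWithin a (Set.Ioo a b)) (nhds 1)) :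
    Filter.Tendsto
      (fun t => (Real.sin (θ t)) ^ 2 / (z t - Real.cos (θ t)) ^ ((3 : ℝ) / 2))
      (nhdsWithin a (Set.Ioo a b)) (nhds (4 * Real.sqrt 2 / 3)) :=
  sin_sq_div_rpow_tendsto_general a b θ z θ' hdom hθ hθ'eq hz' hθlim hzlim
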